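/- arXiv:1305.5826 — 2 statements merged into one kernel-verified Lean document; each statement's English description precedes it below -/
import Mathlib

section
/- (Theorem 1, covariance part: pPITC equals PITC.) For every block index m, the pPITC predictive covariance equals the centralized PITC predictive covariance: Σ_{U_m U_m} − Σ_{U_m S} (Σ_{SS}^{-1} − Σ̈_{SS}^{-1}) Σ_{S U_m} = Σ_{U_m U_m} − Γ_{U_m D} (Γ_{DD} + Λ)^{-1} Γ_{D U_m}, where Γ_{U_m D} is the block row with blocks Γ_{U_m D_1},…,Γ_{U_m D_M}, Γ_{D U_m} is its transpose, and Γ_{DD} + Λ is assumed invertible. -/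
/-!
With `Λ` invertible blockwise, `Σ̈_SS = Σ_SS + K Λ⁻¹ Kᵀ` where `K = Σ_SD` is the block row of the
`Σ_{S D_m}`. The Woodbury identity then gives
`Σ_SS⁻¹ - Σ̈_SS⁻¹ = Σ_SS⁻¹ K (Λ + Kᵀ Σ_SS⁻¹ K)⁻¹ Kᵀ Σ_SS⁻¹ = Σ_SS⁻¹ K (Γ_DD + Λ)⁻¹ Kᵀ Σ_SS⁻¹`,
and sandwiching between `Σ_{U_m S}` and `Σ_{S U_m}` turns `Σ_{U_m S} Σ_SS⁻¹ K` into `Γ_{U_m D}`.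
-/

open Matrix

namespace Matrix

variable {ι κ : Type*} {M : ℕ} {D : Fin M → Type*}

def blockRow {α : Type*} (A : ∀ m, Matrix ι (D m) α) : Matrix ι ((m : Fin M) × D m) α :=
  of fun i d => A d.1 i d.2

lemma mul_blockRow {α : Type*} [NonUnitalNonAssocSemiring α] [Fintype κ]
    (X : Matrix ι κ α) (A : ∀ m, Matrix κ (D m) α) :
    X * blockRow A = blockRow fun m => X * A m := by
  ext i d
  simp only [blockRow, mul_apply, of_apply]

lemma blockRow_mul_blockDiagonal'_mul_transpose {α : Type*} [CommSemiring α]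
    [∀ m, Fintype (D m)] (A : ∀ m, Matrix ι (D m) α) (Q : ∀ m, Matrix (D m) (D m) α)
    (B : ∀ m, Matrix κ (D m) α) :
    blockRow A * blockDiagonal' Q * (blockRow B)ᵀ = ∑ m, A m * Q m * (B m)ᵀ := by
  ext i j
  simp only [blockRow, mul_apply, transpose_apply, of_apply, sum_apply,
    ← Finset.univ_sigma_univ, Finset.sum_sigma, blockDiagonal'_apply]
  refine Finset.sum_congr rfl fun m _ => Finset.sum_congr rfl fun e _ => ?_
  rw [Fintype.sum_eq_single m fun k hk => by simp [hk]]
  simp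

lemma blockDiagonal'_mul_blockDiagonal'_inv {α : Type*} [Field α] [∀ m, Fintype (D m)]
    [∀ m, DecidableEq (D m)]
    (Q : ∀ m, Matrix (D m) (D m) α) (hQ : ∀ m, IsUnit (Q m).det) :
    blockDiagonal' Q * blockDiagonal' (fun m => (Q m)⁻¹) = 1 := by
  rw [← blockDiagonal'_mul, ← blockDiagonal'_one]
  exact congrArg _ (funext fun m => mul_nonsing_inv _ (hQ m))

lemma inv_sub_inv_add_mul_inv_mul {n p α : Type*} [Fintype n] [DecidableEq n] [Fintype p]
    [DecidableEq p] [Field α] (A : Matrix n n α) (U : Matrix n p α) (C : Matrix p p α)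
    (V : Matrix p n α) (hA : IsUnit A.det) (hC : IsUnit C.det)
    (hCVAU : IsUnit (C + V * A⁻¹ * U).det) :
    A⁻¹ - (A + U * C⁻¹ * V)⁻¹ = A⁻¹ * U * (C + V * A⁻¹ * U)⁻¹ * V * A⁻¹ := by
  rw [add_mul_mul_inv_eq_sub _ _ _ _ ((isUnit_iff_isUnit_det _).2 hA)
    ((isUnit_iff_isUnit_det _).2 (isUnit_nonsing_inv_det _ hC)), nonsing_inv_nonsing_inv _ hC,
    sub_sub_cancel]
  rwa [nonsing_inv_nonsing_inv _ hC, isUnit_iff_isUnit_det]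

end Matrix

theorem stmt_5_general
    {M : ℕ}
    {S : Type} [Fintype S] [DecidableEq S]
    {D : Fin M → Type} [∀ m, Fintype (D m)] [∀ m, DecidableEq (D m)]
    (KSS : Matrix S S ℝ) (hKSSsym : KSSᵀ = KSS) (hKSSinv : IsUnit KSS.det)
    (KSD : ∀ m, Matrix S (D m) ℝ)
    (Q : ∀ m, Matrix (D m) (D m) ℝ)
    (hQinv : ∀ m, IsUnit (Q m).det)
    (Λ : Matrix ((m : Fin M) × D m) ((m : Fin M) × D m) ℝ)
    (hΛ : Λ = Matrix.blockDiagonal' Q)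
    (KSDf : Matrix S ((m : Fin M) × D m) ℝ)
    (hKSDf : KSDf = Matrix.of fun s d => KSD d.1 s d.2)
    (Kdd : Matrix S S ℝ)
    (hKdd : Kdd = KSS + ∑ m, KSD m * (Q m)⁻¹ * (KSD m)ᵀ)
    {U : Fin M → Type}
    (KUS : ∀ m, Matrix (U m) S ℝ)
    (KUU : ∀ m, Matrix (U m) (U m) ℝ)
    (ΓDD : Matrix ((m : Fin M) × D m) ((m : Fin M) × D m) ℝ)
    (hΓDD : ΓDD = KSDfᵀ * KSS⁻¹ * KSDf)
    (Γrow : ∀ m, Matrix (U m) ((k : Fin M) × D k) ℝ)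
    (hΓrow : ∀ m, Γrow m = Matrix.of fun u d => (KUS m * KSS⁻¹ * KSD d.1) u d.2)
    (hGLinv : IsUnit (ΓDD + Λ).det)
    :
    ∀ m, KUU m - KUS m * (KSS⁻¹ - Kdd⁻¹) * (KUS m)ᵀ
      = KUU m - Γrow m * (ΓDD + Λ)⁻¹ * (Γrow m)ᵀ := by
  intro m
  have hΛinv : Λ⁻¹ = blockDiagonal' fun m => (Q m)⁻¹ :=
    inv_eq_right_inv (hΛ ▸ blockDiagonal'_mul_blockDiagonal'_inv Q hQinv)
  have hΛdet : IsUnit Λ.det :=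
    isUnit_det_of_right_inverse (hΛ ▸ blockDiagonal'_mul_blockDiagonal'_inv Q hQinv)
  have hKdd' : Kdd = KSS + KSDf * Λ⁻¹ * KSDfᵀ := by
    rw [hKdd, hΛinv, hKSDf, ← blockRow, blockRow_mul_blockDiagonal'_mul_transpose]
  have hΓrow' : Γrow m = KUS m * KSS⁻¹ * KSDf := by
    rw [hΓrow, hKSDf, ← blockRow, mul_blockRow]; rfl
  have hGL : ΓDD + Λ = Λ + KSDfᵀ * KSS⁻¹ * KSDf := by rw [hΓDD, add_comm]
  rw [hKdd', inv_sub_inv_add_mul_inv_mul _ _ _ _ hKSSinv hΛdet (hGL ▸ hGLinv), ← hGL, hΓrow',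
    transpose_mul, transpose_mul, transpose_nonsing_inv, hKSSsym]
  simp only [Matrix.mul_assoc]

theorem stmt_5
    {M : ℕ} (hM : 0 < M)
    {S : Type} [Fintype S] [DecidableEq S]
    {D : Fin M → Type} [∀ m, Fintype (D m)] [∀ m, DecidableEq (D m)]
    (KSS : Matrix S S ℝ) (hKSSsym : KSSᵀ = KSS) (hKSSinv : IsUnit KSS.det)
    (KSD : ∀ m, Matrix S (D m) ℝ)
    (KDD : ∀ m, Matrix (D m) (D m) ℝ) (hKDDsym : ∀ m, (KDD m)ᵀ = KDD m)
    (Q : ∀ m, Matrix (D m) (D m) ℝ)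
    (hQ : ∀ m, Q m = KDD m - (KSD m)ᵀ * KSS⁻¹ * KSD m)
    (hQinv : ∀ m, IsUnit (Q m).det)
    (Λ : Matrix ((m : Fin M) × D m) ((m : Fin M) × D m) ℝ)
    (hΛ : Λ = Matrix.blockDiagonal' Q)
    (KSDf : Matrix S ((m : Fin M) × D m) ℝ)
    (hKSDf : KSDf = Matrix.of fun s d => KSD d.1 s d.2)
    (Kdd : Matrix S S ℝ)
    (hKdd : Kdd = KSS + ∑ m, KSD m * (Q m)⁻¹ * (KSD m)ᵀ)
    (hKddinv : IsUnit Kdd.det)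
    {U : Fin M → Type} [∀ m, Fintype (U m)] [∀ m, DecidableEq (U m)]
    (KUS : ∀ m, Matrix (U m) S ℝ)
    (KUU : ∀ m, Matrix (U m) (U m) ℝ)
    (ΓDD : Matrix ((m : Fin M) × D m) ((m : Fin M) × D m) ℝ)
    (hΓDD : ΓDD = KSDfᵀ * KSS⁻¹ * KSDf)
    (Γrow : ∀ m, Matrix (U m) ((k : Fin M) × D k) ℝ)
    (hΓrow : ∀ m, Γrow m = Matrix.of fun u d => (KUS m * KSS⁻¹ * KSD d.1) u d.2)
    (hGLinv : IsUnit (ΓDD + Λ).det)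
    :
    ∀ m, KUU m - KUS m * (KSS⁻¹ - Kdd⁻¹) * (KUS m)ᵀ
      = KUU m - Γrow m * (ΓDD + Λ)⁻¹ * (Γrow m)ᵀ :=
  stmt_5_general KSS hKSSsym hKSSinv KSD Q hQinv Λ hΛ KSDf hKSDf Kdd hKdd KUS KUU ΓDD hΓDD Γrow
    hΓrow hGLinv
end

section
/- For every block index m, Γ̃_{U_m D} Λ^{-1} (y_D − μ_D) = Σ_{U_m S} Σ_{SS}^{-1} (ÿ_S − ẏ_S^m) + ẏ_{U_m}^m. -/
/-!
Since Λ is block diagonal with invertible blocks, Λ⁻¹ is block diagonal with blocks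
Σ_{D_k D_k|S}⁻¹, so Γ̃_{U_m D} Λ⁻¹ (y_D − μ_D) splits into one term per block. The m-th block
gives ẏ^m_{U_m}; every other block k gives Σ_{U_m S} Σ_{SS}⁻¹ ẏ^k_S, and these sum to
Σ_{U_m S} Σ_{SS}⁻¹ (ÿ_S − ẏ^m_S).
-/

open Matrix

namespace Matrix

variable {R ι : Type*} [Fintype ι] {α : ι → Type*} [∀ i, Fintype (α i)]

theorem mulVec_sigma {m : Type*} [NonUnitalNonAssocSemiring R]
    (A : Matrix m (Σ i, α i) R) (v : (Σ i, α i) → R) :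
    A *ᵥ v = ∑ i, A.submatrix id (Sigma.mk i) *ᵥ (v ∘ Sigma.mk i) := by
  ext r
  simp only [mulVec, dotProduct, Finset.sum_apply, Fintype.sum_sigma, submatrix_apply, id,
    Function.comp_apply]

theorem blockDiagonal'_mulVec_comp_sigmaMk [DecidableEq ι] [NonUnitalNonAssocSemiring R]
    (A : ∀ i, Matrix (α i) (α i) R) (v : (Σ i, α i) → R) (i : ι) :
    (blockDiagonal' A *ᵥ v) ∘ Sigma.mk i = A i *ᵥ (v ∘ Sigma.mk i) := by
  ext a
  simp only [Function.comp_apply, mulVec, dotProduct, Fintype.sum_sigma]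
  rw [Finset.sum_eq_single i (fun j _ hj => ?_) (by simp)]
  · simp
  · simp [blockDiagonal'_apply_ne A _ _ (Ne.symm hj)]

theorem inv_blockDiagonal' [DecidableEq ι] [∀ i, DecidableEq (α i)] [CommRing R]
    (A : ∀ i, Matrix (α i) (α i) R) (hA : ∀ i, IsUnit (A i).det) :
    (blockDiagonal' A)⁻¹ = blockDiagonal' fun i => (A i)⁻¹ := by
  refine inv_eq_right_inv ?_
  rw [← blockDiagonal'_mul, ← blockDiagonal'_one]
  exact congrArg blockDiagonal' (funext fun i => mul_nonsing_inv _ (hA i))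

end Matrix

theorem stmt_7_general
    {M : ℕ}
    {S : Type} [Fintype S] [DecidableEq S]
    {D : Fin M → Type} [∀ m, Fintype (D m)] [∀ m, DecidableEq (D m)]
    (KSS : Matrix S S ℝ)
    (KSD : ∀ m, Matrix S (D m) ℝ)
    (Q : ∀ m, Matrix (D m) (D m) ℝ)
    (hQinv : ∀ m, IsUnit (Q m).det)
    (Λ : Matrix ((m : Fin M) × D m) ((m : Fin M) × D m) ℝ)
    (hΛ : Λ = Matrix.blockDiagonal' Q)
    (yD μD : ((m : Fin M) × D m) → ℝ)
    (cY : ∀ m, D m → ℝ) (hcY : ∀ m d, cY m d = yD ⟨m, d⟩ - μD ⟨m, d⟩)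
    (ydot : ∀ m, S → ℝ)
    (hydot : ∀ m, ydot m = KSD m *ᵥ ((Q m)⁻¹ *ᵥ cY m))
    (ydd : S → ℝ) (hydd : ydd = ∑ m, ydot m)
    {U : Fin M → Type}
    (KUS : ∀ m, Matrix (U m) S ℝ)
    (KUD : ∀ m, Matrix (U m) (D m) ℝ)
    (tΓ : ∀ m, Matrix (U m) ((k : Fin M) × D k) ℝ)
    (htΓ : ∀ m, tΓ m = Matrix.of fun u d =>
      if h : d.1 = m then KUD m u (cast (congrArg D h) d.2)
      else (KUS m * KSS⁻¹ * KSD d.1) u d.2)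
    :
    ∀ m, tΓ m *ᵥ (Λ⁻¹ *ᵥ (yD - μD))
      = KUS m *ᵥ (KSS⁻¹ *ᵥ (ydd - ydot m)) + KUD m *ᵥ ((Q m)⁻¹ *ᵥ cY m) := by
  intro m
  have hrestrict : ∀ k, (Λ⁻¹ *ᵥ (yD - μD)) ∘ Sigma.mk k = (Q k)⁻¹ *ᵥ cY k := by
    intro k
    rw [hΛ, inv_blockDiagonal' Q hQinv, blockDiagonal'_mulVec_comp_sigmaMk]
    congr 1
    ext d
    simp [hcY]
  have hdiag : (tΓ m).submatrix id (Sigma.mk m) = KUD m := by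
    ext u d
    simp [htΓ]
  have hoffdiag : ∀ k ≠ m, (tΓ m).submatrix id (Sigma.mk k) = KUS m * KSS⁻¹ * KSD k := by
    intro k hk
    ext u d
    simp [htΓ, hk]
  rw [mulVec_sigma, ← Finset.add_sum_erase _ _ (Finset.mem_univ m), hrestrict, hdiag, add_comm]
  congr 1
  rw [hydd, ← Finset.sum_erase_eq_sub (Finset.mem_univ m), mulVec_sum, mulVec_sum]
  refine Finset.sum_congr rfl fun k hk => ?_
  rw [hoffdiag k (Finset.ne_of_mem_erase hk), hrestrict, hydot]
  simp only [mulVec_mulVec, Matrix.mul_assoc]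

theorem stmt_7
    {M : ℕ} (hM : 0 < M)
    {S : Type} [Fintype S] [DecidableEq S]
    {D : Fin M → Type} [∀ m, Fintype (D m)] [∀ m, DecidableEq (D m)]
    (KSS : Matrix S S ℝ) (hKSSsym : KSSᵀ = KSS) (hKSSinv : IsUnit KSS.det)
    (KSD : ∀ m, Matrix S (D m) ℝ)
    (KDD : ∀ m, Matrix (D m) (D m) ℝ) (hKDDsym : ∀ m, (KDD m)ᵀ = KDD m)
    (Q : ∀ m, Matrix (D m) (D m) ℝ)
    (hQ : ∀ m, Q m = KDD m - (KSD m)ᵀ * KSS⁻¹ * KSD m)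
    (hQinv : ∀ m, IsUnit (Q m).det)
    (Λ : Matrix ((m : Fin M) × D m) ((m : Fin M) × D m) ℝ)
    (hΛ : Λ = Matrix.blockDiagonal' Q)
    (KSDf : Matrix S ((m : Fin M) × D m) ℝ)
    (hKSDf : KSDf = Matrix.of fun s d => KSD d.1 s d.2)
    (yD μD : ((m : Fin M) × D m) → ℝ)
    (cY : ∀ m, D m → ℝ) (hcY : ∀ m d, cY m d = yD ⟨m, d⟩ - μD ⟨m, d⟩)
    (ydot : ∀ m, S → ℝ)
    (hydot : ∀ m, ydot m = KSD m *ᵥ ((Q m)⁻¹ *ᵥ cY m))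
    (ydd : S → ℝ) (hydd : ydd = ∑ m, ydot m)
    {U : Fin M → Type} [∀ m, Fintype (U m)] [∀ m, DecidableEq (U m)]
    (KUS : ∀ m, Matrix (U m) S ℝ)
    (KUD : ∀ m, Matrix (U m) (D m) ℝ)
    (tΓ : ∀ m, Matrix (U m) ((k : Fin M) × D k) ℝ)
    (htΓ : ∀ m, tΓ m = Matrix.of fun u d =>
      if h : d.1 = m then KUD m u (cast (congrArg D h) d.2)
      else (KUS m * KSS⁻¹ * KSD d.1) u d.2)
    :
    ∀ m, tΓ m *ᵥ (Λ⁻¹ *ᵥ (yD - μD))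
      = KUS m *ᵥ (KSS⁻¹ *ᵥ (ydd - ydot m)) + KUD m *ᵥ ((Q m)⁻¹ *ᵥ cY m) :=
  stmt_7_general KSS KSD Q hQinv Λ hΛ yD μD cY hcY ydot hydot ydd hydd KUS KUD tΓ htΓ
end
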